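/- arXiv:2412.07086 — 2 statements merged into one kernel-verified Lean document; each statement's English description precedes it below -/
import Mathlib

section
/- Let U be a type and B a pointed ω-complete partial order, and equip E = U → B with the pointwise order (so E is a pointed ωcpo with bottom λx.⊥ and pointwise ωSup). Let F, G : E → E be ω-continuous, let φ = ωSup of the chain k ↦ F^[k](⊥) and γ = ωSup of the chain k ↦ G^[k](⊥) (these are the least fixed points of F and G). Let R be an admissible relation on B, and let X ⊆ U. Define φ'₀ ∈ E by φ'₀(x) = φ(x) if x ∈ X and φ'₀(x) = ⊥ otherwise, and φ'ₖ = F^[k](φ'₀); define γ'₀ and γ'ₖ analogously from γ and G. Assume: (1) for all k ≥ 0 and all x ∈ U, R (φ'ₖ(x)) (γ'ₖ(x)); (2) for all x ∈ X, φ(x) ≤ φ'₁(x); (3) for all x ∈ X, γ(x) ≤ γ'₁(x). Then for all x ∈ U, R (φ(x)) (γ(x)). -/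
/-!
The restarted seed `φ'₀` satisfies `φ'₀ ≤ F φ'₀` (by (2)) and `⊥ ≤ φ'₀ ≤ φ`, so its iterates form a
chain whose supremum is a fixed point of `F` lying between the least fixed point `φ` and itself,
hence equal to `φ`; likewise for `γ`. Admissibility of `R`, applied pointwise, carries (1) to
the limit.
-/

open OmegaCompletePartialOrder fixedPoints

/-- Both suprema are fixed points of `f`, and each is below every fixed point above its seed. -/
theorem OmegaCompletePartialOrder.fixedPoints.ωSup_iterateChain_eq_of_le
    {α : Type*} [OmegaCompletePartialOrder α] [OrderBot α] (f : α →𝒄 α) {x : α}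
    (hx : x ≤ f x) (hx_le : x ≤ ωSup (iterateChain f ⊥ bot_le)) :
    ωSup (iterateChain f x hx) = ωSup (iterateChain f ⊥ bot_le) :=
  le_antisymm
    (ωSup_iterate_le_fixedPoint f x hx (ωSup_iterate_mem_fixedPoint f ⊥ bot_le) hx_le)
    (ωSup_iterate_le_fixedPoint f ⊥ bot_le (ωSup_iterate_mem_fixedPoint f x hx) bot_le)

theorem Pi.le_of_forall_mem_le_of_forall_not_mem_eq_bot {U B : Type*} [Preorder B] [OrderBot B]
    {X : Set U} {p q r : U → B} (hX : ∀ x ∈ X, p x = q x) (hout : ∀ x ∉ X, p x = ⊥)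
    (hqr : ∀ x ∈ X, q x ≤ r x) : p ≤ r := by
  intro x
  by_cases hx : x ∈ X
  · exact (hX x hx).trans_le (hqr x hx)
  · exact (hout x hx).trans_le bot_le

theorem Pi.rel_ωSup_apply {U B : Type*} [OmegaCompletePartialOrder B] {R : B → B → Prop}
    (hR : ∀ c c' : Chain B, (∀ k, R (c k) (c' k)) → R (ωSup c) (ωSup c'))
    {c c' : Chain (U → B)} (h : ∀ k x, R (c k x) (c' k x)) (x : U) :
    R (ωSup c x) (ωSup c' x) :=
  hR (c.map (Pi.evalOrderHom x)) (c'.map (Pi.evalOrderHom x)) fun k => h k x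

theorem stmt_0 {U B : Type*} [OmegaCompletePartialOrder B] [OrderBot B]
    (F G : (U → B) → (U → B)) (hF : ωScottContinuous F) (hG : ωScottContinuous G)
    (cF cG : Chain (U → B))
    (hcF : ∀ k, cF k = F^[k] ⊥) (hcG : ∀ k, cG k = G^[k] ⊥)
    (φ γ : U → B) (hφ : φ = ωSup cF) (hγ : γ = ωSup cG)
    (R : B → B → Prop)
    (hR : ∀ c c' : Chain B, (∀ k, R (c k) (c' k)) → R (ωSup c) (ωSup c'))
    (X : Set U) (φ'₀ γ'₀ : U → B)
    (hφ'₀X : ∀ x ∈ X, φ'₀ x = φ x) (hφ'₀out : ∀ x ∉ X, φ'₀ x = ⊥)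
    (hγ'₀X : ∀ x ∈ X, γ'₀ x = γ x) (hγ'₀out : ∀ x ∉ X, γ'₀ x = ⊥)
    (h1 : ∀ (k : ℕ) (x : U), R (F^[k] φ'₀ x) (G^[k] γ'₀ x))
    (h2 : ∀ x ∈ X, φ x ≤ F^[1] φ'₀ x)
    (h3 : ∀ x ∈ X, γ x ≤ G^[1] γ'₀ x) :
    ∀ x : U, R (φ x) (γ x) := by
  let f := ContinuousHom.ofFun F hF
  let g := ContinuousHom.ofFun G hG
  have hcF_eq : cF = iterateChain f ⊥ bot_le := by ext k : 2; exact hcF k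
  have hcG_eq : cG = iterateChain g ⊥ bot_le := by ext k : 2; exact hcG k
  have hφ_lfp : φ = ωSup (iterateChain f ⊥ bot_le) := hcF_eq ▸ hφ
  have hγ_lfp : γ = ωSup (iterateChain g ⊥ bot_le) := hcG_eq ▸ hγ
  have hφ'₀_le_f : φ'₀ ≤ f φ'₀ :=
    Pi.le_of_forall_mem_le_of_forall_not_mem_eq_bot hφ'₀X hφ'₀out h2
  have hγ'₀_le_g : γ'₀ ≤ g γ'₀ :=
    Pi.le_of_forall_mem_le_of_forall_not_mem_eq_bot hγ'₀X hγ'₀out h3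
  have hφ'₀_le : φ'₀ ≤ φ :=
    Pi.le_of_forall_mem_le_of_forall_not_mem_eq_bot hφ'₀X hφ'₀out fun _ _ => le_rfl
  have hγ'₀_le : γ'₀ ≤ γ :=
    Pi.le_of_forall_mem_le_of_forall_not_mem_eq_bot hγ'₀X hγ'₀out fun _ _ => le_rfl
  intro x
  have hR_lim : R (ωSup (iterateChain f φ'₀ hφ'₀_le_f) x)
      (ωSup (iterateChain g γ'₀ hγ'₀_le_g) x) :=
    Pi.rel_ωSup_apply hR h1 x
  rwa [ωSup_iterateChain_eq_of_le f hφ'₀_le_f (hφ_lfp ▸ hφ'₀_le),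
    ωSup_iterateChain_eq_of_le g hγ'₀_le_g (hγ_lfp ▸ hγ'₀_le), ← hφ_lfp, ← hγ_lfp] at hR_lim
end

section
/- Let U be a type, B a pointed ω-complete partial order, and E = U → B with the pointwise order. Let F : E → E be ω-continuous, φ = ωSup of the chain k ↦ F^[k](⊥), and X ⊆ U. Define φ'₀ ∈ E by φ'₀(x) = φ(x) if x ∈ X and φ'₀(x) = ⊥ otherwise. If for all x ∈ X one has φ(x) ≤ (F(φ'₀))(x), then the sequence k ↦ F^[k](φ'₀) is a chain and ωSup (k ↦ F^[k](φ'₀)) = φ. -/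
/-!
By Kleene's argument `φ` is a fixed point of `F`. Since `φ'₀ ≤ φ` and `φ'₀ ≤ F φ'₀`, the iterates of
`φ'₀` form a chain bounded by `φ`; conversely each iterate dominates the corresponding iterate of `⊥`,
so the supremum is also `≥ φ`.
-/

namespace OmegaCompletePartialOrder.fixedPoints

variable {α : Type*} [OmegaCompletePartialOrder α] [OrderBot α]

theorem iterateChain_bot_le (f : α →o α) {x : α} (hx : x ≤ f x) :
    iterateChain f ⊥ bot_le ≤ iterateChain f x hx :=
  fun k => ⟨k, f.monotone.iterate k bot_le⟩

theorem ωSup_iterate_eq_ωSup_iterate_bot (f : α →𝒄 α) {x : α} (hx : x ≤ f x)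
    (hle : x ≤ ωSup (iterateChain f ⊥ bot_le)) :
    ωSup (iterateChain f x hx) = ωSup (iterateChain f ⊥ bot_le) :=
  le_antisymm
    (ωSup_iterate_le_fixedPoint f x hx (ωSup_iterate_mem_fixedPoint f ⊥ bot_le) hle)
    (ωSup_le_ωSup_of_le (iterateChain_bot_le f.toOrderHom hx))

end OmegaCompletePartialOrder.fixedPoints

open OmegaCompletePartialOrder fixedPoints

theorem Pi.le_of_eq_on_of_eq_bot_off {U B : Type*} [Preorder B] [OrderBot B] {X : Set U}
    {g f ψ : U → B} (hX : ∀ x ∈ X, g x = f x) (hout : ∀ x ∉ X, g x = ⊥)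
    (hle : ∀ x ∈ X, f x ≤ ψ x) : g ≤ ψ := by
  intro x
  by_cases hx : x ∈ X
  · exact (hX x hx).trans_le (hle x hx)
  · exact (hout x hx).trans_le bot_le

theorem stmt_7 {U B : Type*} [OmegaCompletePartialOrder B] [OrderBot B]
    (F : (U → B) → (U → B)) (hF : ∃ hf : Monotone F, ∀ c : Chain (U → B), F (ωSup c) = ωSup (c.map ⟨F, hf⟩))
    (c₀ : Chain (U → B)) (hc₀ : ∀ k, c₀ k = F^[k] ⊥)
    (φ : U → B) (hφ : φ = ωSup c₀)
    (X : Set U) (φ'₀ : U → B)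
    (hφ'₀X : ∀ x ∈ X, φ'₀ x = φ x) (hφ'₀out : ∀ x ∉ X, φ'₀ x = ⊥)
    (h : ∀ x ∈ X, φ x ≤ F φ'₀ x) :
    Monotone (fun k : ℕ => F^[k] φ'₀) ∧
      ∀ c : Chain (U → B), (∀ k, c k = F^[k] φ'₀) → ωSup c = φ := by
  obtain ⟨hmono, hcont⟩ := hF
  let f : (U → B) →𝒄 (U → B) := ⟨⟨F, hmono⟩, hcont⟩
  have hpost : φ'₀ ≤ F φ'₀ := Pi.le_of_eq_on_of_eq_bot_off hφ'₀X hφ'₀out h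
  have hle : φ'₀ ≤ φ := Pi.le_of_eq_on_of_eq_bot_off hφ'₀X hφ'₀out fun _ _ => le_rfl
  have hc₀f : c₀ = iterateChain f ⊥ bot_le := Chain.ext (funext hc₀)
  refine ⟨hmono.monotone_iterate_of_le_map hpost, fun c hc => ?_⟩
  have hcf : c = iterateChain f φ'₀ hpost := Chain.ext (funext hc)
  subst hφ hc₀f hcf
  exact ωSup_iterate_eq_ωSup_iterate_bot f hpost hle
end
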